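/- For even N, the number of permutations of [N] all of whose cycle lengths are odd equals N! · 2^{-N} · binomial(N, N/2). -/

import Mathlib

/-!
Let `a n` count the permutations of `n` points with only odd cycles, and `b n c` those whose
even cycles are exactly the cycle through `c`. Every permutation of `Option α` is uniquely
`swap none o * optionCongr e` (`decomposeOption`): for `o = none` the new point is fixed, and for
`o = some c` it is inserted into the `e`-cycle of `c`, which grows by one while all other cycles
are unchanged. Hence `a (n + 1) = a n + ∑ c, b n c`, and, since a fixed point is an odd cycle,
`b (n + 1) none = n * a n`; by symmetry the same holds for every point in place of `none`. So
`a (n + 2) = a (n + 1) + (n + 1) * n * a n`, which gives `a (2m + 1) = (2m + 1) * a (2m)` and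
`a (2m + 2) = (2m + 1)² * a (2m)`, i.e. `a (2m) * 4 ^ m = (2m)! * C(2m, m)`.
-/

open Function

theorem Function.minimalPeriod_eq_of_iterate_eq {α : Type*} {f g : α → α} {x : α}
    (h : ∀ n, g (f^[n] x) = f (f^[n] x)) : minimalPeriod g x = minimalPeriod f x := by
  have hiter : ∀ n, g^[n] x = f^[n] x := by
    intro n
    induction n with
    | zero => rfl
    | succ n ih => rw [iterate_succ_apply', iterate_succ_apply', ih, h]
  rw [minimalPeriod_eq_minimalPeriod_iff]
  intro n
  simp only [IsPeriodicPt, IsFixedPt, hiter]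

theorem Function.Semiconj.minimalPeriod_eq {α β : Type*} {f : α → β} {g : α → α} {h : β → β}
    (hs : Semiconj f g h) (hf : Injective f) (x : α) :
    minimalPeriod h (f x) = minimalPeriod g x := by
  rw [minimalPeriod_eq_minimalPeriod_iff]
  intro n
  simp only [IsPeriodicPt, IsFixedPt, ← (hs.iterate_right n).eq, hf.eq_iff]

namespace Equiv.Perm

variable {α β : Type*}

theorem sameCycle_iff_exists_nat_pow_eq [Finite α] {σ : Perm α} {x y : α} :
    σ.SameCycle x y ↔ ∃ n : ℕ, (σ ^ n) x = y :=
  ⟨SameCycle.exists_nat_pow_eq, fun ⟨n, hn⟩ => ⟨n, by rwa [zpow_natCast]⟩⟩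

theorem sameCycle_apply_iff_of_semiconj [Finite α] [Finite β] {f : α → β} {σ : Perm α}
    {τ : Perm β} (hs : Semiconj f σ τ) (hf : Injective f) {x y : α} :
    τ.SameCycle (f x) (f y) ↔ σ.SameCycle x y := by
  simp only [sameCycle_iff_exists_nat_pow_eq, coe_pow, ← (hs.iterate_right _).eq, hf.eq_iff]

theorem minimalPeriod_eq_ncard_sameCycle [Finite α] (σ : Perm α) (x : α) :
    minimalPeriod σ x = {y | σ.SameCycle x y}.ncard := by
  have horbit : MulAction.orbit (Subgroup.zpowers σ) x = {y | σ.SameCycle x y} := by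
    ext y
    simp only [MulAction.mem_orbit_iff, Subgroup.exists_zpowers, SameCycle]
    rfl
  have : Fintype (MulAction.orbit (Subgroup.zpowers σ) x) := Fintype.ofFinite _
  rw [← Nat.card_coe_set_eq, ← horbit, Nat.card_eq_fintype_card,
    ← MulAction.minimalPeriod_eq_card]
  rfl

theorem SameCycle.minimalPeriod_eq [Finite α] {σ : Perm α} {x y : α} (h : σ.SameCycle x y) :
    minimalPeriod σ x = minimalPeriod σ y := by
  simp only [minimalPeriod_eq_ncard_sameCycle]
  congr 1
  ext z
  exact ⟨h.symm.trans, h.trans⟩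

def AllCyclesOdd (σ : Perm α) : Prop := ∀ x, Odd (minimalPeriod σ x)

def OnlyEvenCycle (σ : Perm α) (c : α) : Prop := ∀ x, Even (minimalPeriod σ x) ↔ σ.SameCycle c x

section insertion

variable [Finite α] [DecidableEq α] {σ : Perm α} {a p : α}

/- `swap a p * σ` agrees with `σ` except that it sends `σ⁻¹ p ↦ a ↦ p`: the fixed point `a` is
inserted into the cycle of `p`. -/
theorem sameCycle_swap_mul_of_sameCycle (ha : σ a = a) (hpa : p ≠ a) {x : α}
    (hx : σ.SameCycle p x) : (swap a p * σ).SameCycle a x := by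
  set τ := swap a p * σ
  have hap : τ.SameCycle a p := ⟨1, by simp [τ, ha]⟩
  obtain ⟨n, rfl⟩ := sameCycle_iff_exists_nat_pow_eq.1 hx
  clear hx
  induction n with
  | zero => exact hap
  | succ n ih =>
    rw [pow_succ', mul_apply]
    by_cases hp : σ ((σ ^ n) p) = p
    · rwa [hp]
    have hne : σ ((σ ^ n) p) ≠ a := fun h => hpa <| (σ ^ (n + 1)).injective <| by
      rw [pow_apply_eq_self_of_apply_eq_self ha, pow_succ', mul_apply, h]
    have : τ ((σ ^ n) p) = σ ((σ ^ n) p) := swap_apply_of_ne_of_ne hne hp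
    rw [← this]
    exact sameCycle_apply_right.2 ih

theorem sameCycle_swap_mul_iff (ha : σ a = a) (hpa : p ≠ a) {x : α} :
    (swap a p * σ).SameCycle a x ↔ x = a ∨ σ.SameCycle p x := by
  refine ⟨fun hx => ?_, fun hx => hx.elim (· ▸ .rfl) (sameCycle_swap_mul_of_sameCycle ha hpa)⟩
  have hmaps : ∀ z, z = a ∨ σ.SameCycle p z →
      (swap a p * σ) z = a ∨ σ.SameCycle p ((swap a p * σ) z) := by
    rintro z (rfl | hz)
    · exact .inr (by simpa [ha] using SameCycle.rfl)
    · simp only [coe_mul, comp_apply, swap_apply_def]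
      split_ifs
      exacts [.inr .rfl, .inl rfl, .inr (sameCycle_apply_right.2 hz)]
  obtain ⟨n, rfl⟩ := sameCycle_iff_exists_nat_pow_eq.1 hx
  clear hx
  induction n with
  | zero => exact .inl rfl
  | succ n ih => rw [pow_succ', mul_apply]; exact hmaps _ ih

theorem minimalPeriod_swap_mul_of_sameCycle (ha : σ a = a) (hpa : p ≠ a) {x : α}
    (hx : (swap a p * σ).SameCycle a x) :
    minimalPeriod (swap a p * σ) x = minimalPeriod σ p + 1 := by
  have hcycle : {x | (swap a p * σ).SameCycle a x} = insert a {x | σ.SameCycle p x} :=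
    Set.ext fun _ => sameCycle_swap_mul_iff ha hpa
  have ha' : a ∉ {x | σ.SameCycle p x} := fun h => hpa (h.eq_of_right ha)
  rw [← hx.minimalPeriod_eq, minimalPeriod_eq_ncard_sameCycle, minimalPeriod_eq_ncard_sameCycle,
    hcycle, Set.ncard_insert_of_notMem ha']

theorem minimalPeriod_swap_mul_of_not_sameCycle (ha : σ a = a) (hpa : p ≠ a) {x : α}
    (hx : ¬ (swap a p * σ).SameCycle a x) :
    minimalPeriod (swap a p * σ) x = minimalPeriod σ x := by
  rw [sameCycle_swap_mul_iff ha hpa, not_or] at hx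
  refine minimalPeriod_eq_of_iterate_eq fun n => ?_
  rw [iterate_eq_pow, mul_apply]
  refine swap_apply_of_ne_of_ne (fun h => hx.1 ?_) (fun h => hx.2 ?_)
  · rw [← ha, σ.injective.eq_iff] at h
    exact (σ ^ n).injective (h.trans (pow_apply_eq_self_of_apply_eq_self ha n).symm)
  · rw [← h]
    exact (sameCycle_apply_right.2 (sameCycle_pow_right.2 SameCycle.rfl)).symm

theorem allCyclesOdd_swap_mul_iff (ha : σ a = a) (hpa : p ≠ a) :
    AllCyclesOdd (swap a p * σ) ↔ OnlyEvenCycle σ p := by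
  constructor
  · intro h x
    by_cases hpx : σ.SameCycle p x
    · have hodd := h a
      rw [minimalPeriod_swap_mul_of_sameCycle ha hpa .rfl, Nat.odd_add_one,
        Nat.not_odd_iff_even] at hodd
      simpa only [hpx, iff_true, ← hpx.minimalPeriod_eq] using hodd
    simp only [hpx, iff_false, Nat.not_even_iff_odd]
    by_cases hxa : x = a
    · rw [hxa, minimalPeriod_eq_one_iff_isFixedPt.2 ha]
      exact odd_one
    have hx : ¬ (swap a p * σ).SameCycle a x := by rw [sameCycle_swap_mul_iff ha hpa]; tauto
    rw [← minimalPeriod_swap_mul_of_not_sameCycle ha hpa hx]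
    exact h x
  · intro h x
    by_cases hx : (swap a p * σ).SameCycle a x
    · rw [minimalPeriod_swap_mul_of_sameCycle ha hpa hx, Nat.odd_add_one, Nat.not_odd_iff_even]
      exact (h p).2 .rfl
    rw [minimalPeriod_swap_mul_of_not_sameCycle ha hpa hx, ← Nat.not_even_iff_odd, h x]
    rw [sameCycle_swap_mul_iff ha hpa] at hx
    tauto

theorem onlyEvenCycle_swap_mul_iff (ha : σ a = a) (hpa : p ≠ a) :
    OnlyEvenCycle (swap a p * σ) a ↔ AllCyclesOdd σ := by
  constructor
  · intro h x
    by_cases hpx : σ.SameCycle p x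
    · have hodd := (h a).2 .rfl
      rw [minimalPeriod_swap_mul_of_sameCycle ha hpa .rfl, Nat.even_add_one,
        Nat.not_even_iff_odd] at hodd
      rwa [← hpx.minimalPeriod_eq]
    by_cases hxa : x = a
    · rw [hxa, minimalPeriod_eq_one_iff_isFixedPt.2 ha]
      exact odd_one
    have hx : ¬ (swap a p * σ).SameCycle a x := by rw [sameCycle_swap_mul_iff ha hpa]; tauto
    rw [← minimalPeriod_swap_mul_of_not_sameCycle ha hpa hx, ← Nat.not_even_iff_odd, h x]
    exact hx
  · intro h x
    by_cases hx : (swap a p * σ).SameCycle a x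
    · rw [minimalPeriod_swap_mul_of_sameCycle ha hpa hx, Nat.even_add_one, Nat.not_even_iff_odd]
      exact iff_of_true (h p) hx
    rw [minimalPeriod_swap_mul_of_not_sameCycle ha hpa hx, ← Nat.not_odd_iff_even]
    exact iff_of_false (not_not_intro (h x)) hx

end insertion

theorem allCyclesOdd_permCongr (f : α ≃ β) (σ : Perm α) :
    AllCyclesOdd (f.permCongr σ) ↔ AllCyclesOdd σ := by
  have hs : Semiconj f σ (f.permCongr σ) := fun x => by simp [permCongr_apply]
  simp only [AllCyclesOdd, f.surjective.forall, hs.minimalPeriod_eq f.injective]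

theorem onlyEvenCycle_permCongr [Finite α] [Finite β] (f : α ≃ β) (σ : Perm α) (c : α) :
    OnlyEvenCycle (f.permCongr σ) (f c) ↔ OnlyEvenCycle σ c := by
  have hs : Semiconj f σ (f.permCongr σ) := fun x => by simp [permCongr_apply]
  simp only [OnlyEvenCycle, f.surjective.forall, hs.minimalPeriod_eq f.injective,
    sameCycle_apply_iff_of_semiconj hs f.injective]

theorem card_allCyclesOdd_congr (f : α ≃ β) :
    Nat.card {σ : Perm β // AllCyclesOdd σ} = Nat.card {σ : Perm α // AllCyclesOdd σ} :=
  (Nat.card_congr (f.permCongr.subtypeEquiv fun σ => (allCyclesOdd_permCongr f σ).symm)).symm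

theorem card_onlyEvenCycle_congr [Finite α] [Finite β] (f : α ≃ β) (c : α) :
    Nat.card {σ : Perm β // OnlyEvenCycle σ (f c)} = Nat.card {σ : Perm α // OnlyEvenCycle σ c} :=
  (Nat.card_congr (f.permCongr.subtypeEquiv fun σ => (onlyEvenCycle_permCongr f σ c).symm)).symm

section option

variable (e : Perm α)

theorem semiconj_some_optionCongr : Semiconj some e (optionCongr e) := fun _ => rfl

theorem minimalPeriod_optionCongr_none : minimalPeriod (optionCongr e) none = 1 :=
  minimalPeriod_eq_one_iff_isFixedPt.2 rfl

theorem allCyclesOdd_optionCongr [Finite α] : AllCyclesOdd (optionCongr e) ↔ AllCyclesOdd e := by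
  simp [AllCyclesOdd, Option.forall, minimalPeriod_optionCongr_none,
    (semiconj_some_optionCongr e).minimalPeriod_eq (Option.some_injective α)]

theorem onlyEvenCycle_optionCongr [Finite α] (c : α) :
    OnlyEvenCycle (optionCongr e) (some c) ↔ OnlyEvenCycle e c := by
  have hnone : ¬ SameCycle (optionCongr e) (some c) none := fun h =>
    Option.some_ne_none c (h.eq_of_right rfl)
  simp [OnlyEvenCycle, Option.forall, minimalPeriod_optionCongr_none, hnone,
    (semiconj_some_optionCongr e).minimalPeriod_eq (Option.some_injective α),
    sameCycle_apply_iff_of_semiconj (semiconj_some_optionCongr e) (Option.some_injective α)]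

theorem not_onlyEvenCycle_optionCongr_none : ¬ OnlyEvenCycle (optionCongr e) none := fun h => by
  simpa [minimalPeriod_optionCongr_none] using (h none).2 .rfl

end option

section counting

variable [Fintype α] [DecidableEq α]

theorem card_subtype_perm_option (P : Perm (Option α) → Prop) :
    Nat.card {σ // P σ} = Nat.card {e : Perm α // P (optionCongr e)} +
      ∑ c, Nat.card {e : Perm α // P (swap none (some c) * optionCongr e)} := by
  calc Nat.card {σ // P σ}
      = Nat.card {x : Option α × Perm α // P (decomposeOption.symm x)} :=
        Nat.card_congr (decomposeOption.subtypeEquiv fun σ => by simp)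
    _ = Nat.card (Σ o, {e : Perm α // P (decomposeOption.symm (o, e))}) :=
        Nat.card_congr (subtypeProdEquivSigmaSubtype fun o e => P (decomposeOption.symm (o, e)))
    _ = ∑ o, Nat.card {e : Perm α // P (decomposeOption.symm (o, e))} := Nat.card_sigma
    _ = _ := by simp [Fintype.sum_option, ← one_def]

theorem card_allCyclesOdd_option :
    Nat.card {σ : Perm (Option α) // AllCyclesOdd σ} =
      Nat.card {σ : Perm α // AllCyclesOdd σ} +
        ∑ c, Nat.card {σ : Perm α // OnlyEvenCycle σ c} := by
  rw [card_subtype_perm_option]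
  congr 1
  · exact Nat.card_congr (subtypeEquivRight fun e => allCyclesOdd_optionCongr e)
  · refine Finset.sum_congr rfl fun c _ => Nat.card_congr (subtypeEquivRight fun e => ?_)
    rw [allCyclesOdd_swap_mul_iff rfl (Option.some_ne_none c), onlyEvenCycle_optionCongr]

theorem card_onlyEvenCycle_option_none :
    Nat.card {σ : Perm (Option α) // OnlyEvenCycle σ none} =
      Fintype.card α * Nat.card {σ : Perm α // AllCyclesOdd σ} := by
  have hnone : Nat.card {e : Perm α // OnlyEvenCycle (optionCongr e) none} = 0 :=
    Nat.card_eq_zero.2 (.inl ⟨fun e => not_onlyEvenCycle_optionCongr_none e.1 e.2⟩)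
  have hsome (c : α) :
      Nat.card {e : Perm α // OnlyEvenCycle (swap none (some c) * optionCongr e) none} =
        Nat.card {σ : Perm α // AllCyclesOdd σ} :=
    Nat.card_congr (subtypeEquivRight fun e => by
      rw [onlyEvenCycle_swap_mul_iff rfl (Option.some_ne_none c), allCyclesOdd_optionCongr])
  simp [card_subtype_perm_option, hnone, hsome]

end counting

end Equiv.Perm

open Nat Equiv Equiv.Perm

noncomputable def numAllCyclesOdd (n : ℕ) : ℕ := Nat.card {σ : Perm (Fin n) // AllCyclesOdd σ}

theorem numAllCyclesOdd_zero : numAllCyclesOdd 0 = 1 := by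
  simp [numAllCyclesOdd, Nat.card_eq_fintype_card, AllCyclesOdd]

theorem numAllCyclesOdd_succ (n : ℕ) :
    numAllCyclesOdd (n + 1) =
      numAllCyclesOdd n + ∑ c : Fin n, Nat.card {σ : Perm (Fin n) // OnlyEvenCycle σ c} := by
  rw [numAllCyclesOdd, card_allCyclesOdd_congr (finSuccEquiv n).symm, card_allCyclesOdd_option,
    numAllCyclesOdd]

theorem card_onlyEvenCycle_fin_succ (n : ℕ) (c : Fin (n + 1)) :
    Nat.card {σ : Perm (Fin (n + 1)) // OnlyEvenCycle σ c} = n * numAllCyclesOdd n := by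
  have hc : ((finSuccEquiv n).symm.trans (swap 0 c)) none = c := by simp
  rw [← hc, card_onlyEvenCycle_congr, card_onlyEvenCycle_option_none, Fintype.card_fin,
    numAllCyclesOdd]

theorem numAllCyclesOdd_succ_succ (n : ℕ) :
    numAllCyclesOdd (n + 2) = numAllCyclesOdd (n + 1) + (n + 1) * (n * numAllCyclesOdd n) := by
  simp [numAllCyclesOdd_succ (n + 1), card_onlyEvenCycle_fin_succ]

theorem numAllCyclesOdd_two_mul_add_one (m : ℕ) :
    numAllCyclesOdd (2 * m + 1) = (2 * m + 1) * numAllCyclesOdd (2 * m) := by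
  induction m with
  | zero => simp [numAllCyclesOdd_succ, numAllCyclesOdd_zero]
  | succ m ih =>
    rw [show 2 * (m + 1) + 1 = 2 * m + 1 + 2 by ring, numAllCyclesOdd_succ_succ,
      show 2 * (m + 1) = 2 * m + 2 by ring, numAllCyclesOdd_succ_succ, ih]
    ring

theorem numAllCyclesOdd_two_mul (m : ℕ) :
    numAllCyclesOdd (2 * m) * 2 ^ (2 * m) = (2 * m)! * centralBinom m := by
  induction m with
  | zero => simp [numAllCyclesOdd_zero]
  | succ m ih =>
    have hrec : numAllCyclesOdd (2 * (m + 1)) = (2 * m + 1) ^ 2 * numAllCyclesOdd (2 * m) := by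
      rw [show 2 * (m + 1) = 2 * m + 2 by ring, numAllCyclesOdd_succ_succ,
        numAllCyclesOdd_two_mul_add_one]
      ring
    have hbinom := succ_mul_centralBinom_succ m
    apply Nat.eq_of_mul_eq_mul_left (Nat.add_one_pos m)
    rw [hrec, show 2 * (m + 1) = 2 * m + 1 + 1 by ring, factorial_succ, factorial_succ, pow_succ,
      pow_succ]
    linear_combination 4 * (m + 1) * (2 * m + 1) ^ 2 * ih -
      (2 * m + 1 + 1) * (2 * m + 1) * (2 * m)! * hbinom

theorem numOddCyclePermsEven_general (N : ℕ) (hNe : Even N) :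
    (Nat.card {σ : Equiv.Perm (Fin N) //
        ∀ x : Fin N, Odd (Function.minimalPeriod σ x)} : ℚ)
      = (N ! : ℚ) * ((2 : ℚ) ^ N)⁻¹ * (N.choose (N / 2)) := by
  obtain ⟨m, rfl⟩ := hNe
  rw [← two_mul, Nat.mul_div_cancel_left m two_pos, ← centralBinom_eq_two_mul_choose,
    mul_right_comm, eq_mul_inv_iff_mul_eq₀ (by positivity)]
  exact_mod_cast numAllCyclesOdd_two_mul m

/-- For even `N`, the number of permutations of `[N]` all of whose cycle lengths
are odd equals `N! · 2^{-N} · C(N, N/2)`. -/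
theorem numOddCyclePermsEven (N : ℕ) (hN : 0 < N) (hNe : Even N) :
    (Nat.card {σ : Equiv.Perm (Fin N) //
        ∀ x : Fin N, Odd (Function.minimalPeriod σ x)} : ℚ)
      = (N ! : ℚ) * ((2 : ℚ) ^ N)⁻¹ * (N.choose (N / 2)) :=
  numOddCyclePermsEven_general N hNe
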